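/- For all integers a and b with 3 ≤ a and 3 ≤ b, the equation cos(π/a)² + cos(π/b)² = (5 + √5)/8 holds if and only if {a, b} = {3, 5}, i.e., if and only if (a = 3 and b = 5) or (a = 5 and b = 3). -/

import Mathlib

/-!
For `n ≥ 2` the value `cos (π / n) ^ 2` increases with `n`, and equals `1/4, 1/2, (3 + √5)/8, 3/4`
at `n = 3, 4, 5, 6`. If both `a, b ≥ 4` the sum is at least `1 > (5 + √5)/8`, so one of them is `3`,
and the other must then satisfy `cos (π / n) ^ 2 = (3 + √5)/8`, which lies strictly between the
values at `4` and `6`; hence `n = 5`.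
-/

open Real

lemma cos_pi_div_le_cos_pi_div {x y : ℝ} (hx : 1 ≤ x) (hxy : x ≤ y) :
    cos (π / x) ≤ cos (π / y) := by
  have hx₀ : 0 < x := by linarith
  apply cos_le_cos_of_nonneg_of_le_pi (div_nonneg pi_pos.le (by linarith))
  · exact div_le_self pi_pos.le hx
  · exact div_le_div_of_nonneg_left pi_pos.le hx₀ hxy

lemma cos_pi_div_nonneg {x : ℝ} (hx : 2 ≤ x) : 0 ≤ cos (π / x) := by
  have hpos : 0 ≤ π / x := div_nonneg pi_pos.le (by linarith)
  exact cos_nonneg_of_mem_Icc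
    ⟨by linarith [pi_pos], div_le_div_of_nonneg_left pi_pos.le two_pos hx⟩

lemma cos_sq_pi_div_le_cos_sq_pi_div {x y : ℝ} (hx : 2 ≤ x) (hxy : x ≤ y) :
    cos (π / x) ^ 2 ≤ cos (π / y) ^ 2 :=
  pow_le_pow_left₀ (cos_pi_div_nonneg hx) (cos_pi_div_le_cos_pi_div (by linarith) hxy) 2

lemma cos_sq_pi_div_three : cos (π / 3) ^ 2 = 1 / 4 := by
  rw [cos_pi_div_three]; norm_num

lemma cos_sq_pi_div_four : cos (π / 4) ^ 2 = 1 / 2 := by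
  rw [cos_pi_div_four, div_pow, sq_sqrt zero_le_two]; norm_num

lemma cos_sq_pi_div_five : cos (π / 5) ^ 2 = (3 + √5) / 8 := by
  rw [cos_pi_div_five]
  nlinarith [sq_sqrt (show (0 : ℝ) ≤ 5 by norm_num)]

lemma cos_sq_pi_div_six : cos (π / 6) ^ 2 = 3 / 4 := by
  rw [cos_pi_div_six, div_pow, sq_sqrt zero_le_three]; norm_num

lemma one_lt_sqrt_five : 1 < √5 := by
  rw [lt_sqrt zero_le_one]; norm_num

lemma sqrt_five_lt_three : √5 < 3 := by
  rw [sqrt_lt' three_pos]; norm_num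

lemma eq_five_of_cos_sq_pi_div_eq {n : ℤ} (hn : 3 ≤ n) (h : cos (π / n) ^ 2 = (3 + √5) / 8) :
    n = 5 := by
  have hn' : (3 : ℝ) ≤ n := by exact_mod_cast hn
  rcases lt_trichotomy n 5 with hlt | heq | hgt
  · have hle : (n : ℝ) ≤ 4 := by exact_mod_cast Int.lt_add_one_iff.mp hlt
    have := cos_sq_pi_div_le_cos_sq_pi_div (by linarith) hle
    rw [cos_sq_pi_div_four] at this
    linarith [one_lt_sqrt_five]
  · exact heq
  · have hge : (6 : ℝ) ≤ n := by exact_mod_cast Int.add_one_le_iff.mpr hgt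
    have := cos_sq_pi_div_le_cos_sq_pi_div (by norm_num) hge
    rw [cos_sq_pi_div_six] at this
    linarith [sqrt_five_lt_three]

lemma eq_three_or_eq_three_of_cos_sq_add_cos_sq_lt_one {a b : ℤ} (ha : 3 ≤ a) (hb : 3 ≤ b)
    (h : cos (π / a) ^ 2 + cos (π / b) ^ 2 < 1) : a = 3 ∨ b = 3 := by
  by_contra! hne
  have ha' : (4 : ℝ) ≤ a := by exact_mod_cast (show 4 ≤ a by omega)
  have hb' : (4 : ℝ) ≤ b := by exact_mod_cast (show 4 ≤ b by omega)
  have hA := cos_sq_pi_div_le_cos_sq_pi_div (by norm_num) ha'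
  have hB := cos_sq_pi_div_le_cos_sq_pi_div (by norm_num) hb'
  rw [cos_sq_pi_div_four] at hA hB
  linarith

theorem yang_lee_two_term (a b : ℤ) (ha : 3 ≤ a) (hb : 3 ≤ b) :
    Real.cos (π / (a : ℝ)) ^ 2 + Real.cos (π / (b : ℝ)) ^ 2 = (5 + Real.sqrt 5) / 8 ↔
      (a = 3 ∧ b = 5) ∨ (a = 5 ∧ b = 3) := by
  constructor
  · intro h
    have hlt : cos (π / a) ^ 2 + cos (π / b) ^ 2 < 1 := by linarith [sqrt_five_lt_three]
    rcases eq_three_or_eq_three_of_cos_sq_add_cos_sq_lt_one ha hb hlt with rfl | rfl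
    · push_cast at h
      exact Or.inl ⟨rfl, eq_five_of_cos_sq_pi_div_eq hb (by linarith [cos_sq_pi_div_three])⟩
    · push_cast at h
      exact Or.inr ⟨eq_five_of_cos_sq_pi_div_eq ha (by linarith [cos_sq_pi_div_three]), rfl⟩
  · rintro (⟨rfl, rfl⟩ | ⟨rfl, rfl⟩) <;>
    · push_cast
      rw [cos_sq_pi_div_three, cos_sq_pi_div_five]
      ring
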